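/- arXiv:2604.04141 — 2 statements merged into one kernel-verified Lean document; each statement's English description precedes it below -/
import Mathlib

section
/- Let σ² > 0, let d_1, …, d_m > 0, let X be a real m × p matrix of full column rank with rows x_jᵀ, and for ε ∈ (0,1] let D(ε) be the m × m diagonal matrix with entries (σ² + d_j/ε)⁻¹ and M(ε) = Xᵀ D(ε) X. Fix i and a nonzero x_i ∈ ℝ^p, and define g₂ᵢ(ε) = (1 − γ_i(ε))² · x_iᵀ M(ε)⁻¹ x_i with γ_i(ε) = σ²/(σ² + d_i/ε). Then g₂ᵢ is strictly decreasing in ε on (0,1). In particular g₂ᵢ(ε) > g₂ᵢ(1) for every ε ∈ (0,1), so the parameter-uncertainty contribution to the thinning gap is positive. -/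
open Matrix

lemma myPosDef_conj {n q : ℕ} {A : Matrix (Fin n) (Fin n) ℝ} (hA : A.PosDef)
    (X : Matrix (Fin n) (Fin q) ℝ) (hX : Function.Injective X.mulVec) :
    (Xᵀ * A * X).PosDef := by
  have hXH : Xᴴ = Xᵀ := Matrix.conjTranspose_eq_transpose_of_trivial X
  rw [← hXH]
  refine Matrix.posDef_iff_dotProduct_mulVec.mpr ⟨?_, ?_⟩
  · exact Matrix.isHermitian_conjTranspose_mul_mul X hA.1
  · intro v hv
    have hXv : X *ᵥ v ≠ 0 := by
      intro h
      exact hv (hX (by simpa using h))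
    have := hA.dotProduct_mulVec_pos hXv
    simpa only [star_mulVec, Matrix.dotProduct_mulVec, Matrix.vecMul_vecMul] using this

lemma myInvDiff_posDef {n : ℕ} {M1 M2 : Matrix (Fin n) (Fin n) ℝ}
    (h1 : M1.PosDef) (h2 : M2.PosDef) (hA : (M2 - M1).PosDef) :
    (M1⁻¹ - M2⁻¹).PosDef := by
  have d1 : IsUnit M1.det := h1.det_pos.ne'.isUnit
  have d2 : IsUnit M2.det := h2.det_pos.ne'.isUnit
  set A := M2 - M1 with hAdef
  have e1 : M1⁻¹ - M2⁻¹ = M2⁻¹ * A * M1⁻¹ := by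
    rw [hAdef, Matrix.mul_sub, Matrix.sub_mul, Matrix.nonsing_inv_mul _ d2,
      Matrix.mul_nonsing_inv_cancel_right _ _ d1, one_mul]
  have e2 : M1⁻¹ - M2⁻¹ = M1⁻¹ * A * M2⁻¹ := by
    rw [hAdef, Matrix.mul_sub, Matrix.sub_mul, Matrix.mul_nonsing_inv_cancel_right _ _ d2,
      Matrix.nonsing_inv_mul _ d1, one_mul]
  have e3 : M1⁻¹ = M2⁻¹ + M1⁻¹ * A * M2⁻¹ := by
    rw [← e2]; abel
  have e4 : M1⁻¹ - M2⁻¹ = M2⁻¹ * A * M2⁻¹ + M2⁻¹ * A * (M1⁻¹ * A * M2⁻¹) := by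
    rw [e1]
    nth_rewrite 1 [e3]
    rw [Matrix.mul_add]
  rw [e4]
  have h2invH : (M2⁻¹)ᵀ = M2⁻¹ := by
    have := h2.inv.isHermitian
    rwa [Matrix.IsHermitian, Matrix.conjTranspose_eq_transpose_of_trivial] at this
  have hAH : Aᵀ = A := by
    have := hA.isHermitian
    rwa [Matrix.IsHermitian, Matrix.conjTranspose_eq_transpose_of_trivial] at this
  have hinj2 : Function.Injective (M2⁻¹).mulVec :=
    Matrix.mulVec_injective_iff_isUnit.mpr h2.inv.isUnit
  have pd1 : (M2⁻¹ * A * M2⁻¹).PosDef := by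
    have := myPosDef_conj hA M2⁻¹ hinj2
    rwa [h2invH] at this
  have psd2 : (M2⁻¹ * A * (M1⁻¹ * A * M2⁻¹)).PosSemidef := by
    have := (h1.inv.posSemidef).conjTranspose_mul_mul_same (A * M2⁻¹)
    have hB : (A * M2⁻¹)ᴴ = M2⁻¹ * A := by
      rw [Matrix.conjTranspose_eq_transpose_of_trivial, Matrix.transpose_mul, h2invH, hAH]
    rw [hB] at this
    rw [show M2⁻¹ * A * (M1⁻¹ * A * M2⁻¹) = M2⁻¹ * A * M1⁻¹ * (A * M2⁻¹) by
      simp only [Matrix.mul_assoc]]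
    exact this
  exact pd1.add_posSemidef psd2


/-- Monotonicity of the parameter-uncertainty term. With
`D(ε) = diag((σ² + dⱼ/ε)⁻¹)`, `M(ε) = XᵀD(ε)X` for a full-column-rank `X`, and
`g₂ᵢ(ε) = (1 − γᵢ(ε))² · xᵢᵀ M(ε)⁻¹ xᵢ` where `γᵢ(ε) = σ²/(σ² + dᵢ/ε)` and `xᵢ ≠ 0`
is the `i`-th row of `X`, the function `g₂ᵢ` is strictly decreasing on `(0,1)`, and in
particular `g₂ᵢ(ε) > g₂ᵢ(1)` for every `ε ∈ (0,1)`. -/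
theorem g2_strict_anti (m p : ℕ) (σsq : ℝ) (hσ : 0 < σsq)
    (d : Fin m → ℝ) (hd : ∀ j, 0 < d j)
    (X : Matrix (Fin m) (Fin p) ℝ)
    (hX : LinearIndependent ℝ (fun j : Fin p => fun i : Fin m => X i j))
    (i : Fin m) (hxi : X i ≠ 0)
    (D : ℝ → Matrix (Fin m) (Fin m) ℝ)
    (hD : D = fun ε => Matrix.diagonal (fun j => (σsq + d j / ε)⁻¹))
    (M : ℝ → Matrix (Fin p) (Fin p) ℝ) (hM : M = fun ε => Xᵀ * D ε * X)
    (γi : ℝ → ℝ) (hγ : γi = fun ε => σsq / (σsq + d i / ε))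
    (g2 : ℝ → ℝ)
    (hg2 : g2 = fun ε => (1 - γi ε) ^ 2 * (X i ⬝ᵥ (M ε)⁻¹ *ᵥ X i)) :
    StrictAntiOn g2 (Set.Ioo (0 : ℝ) 1) ∧
    ∀ ε ∈ Set.Ioo (0 : ℝ) 1, g2 1 < g2 ε := by
  have hXinj : Function.Injective X.mulVec := Matrix.mulVec_injective_iff.mpr hX
  have hden : ∀ ε : ℝ, 0 < ε → ∀ j, 0 < σsq + d j / ε := fun ε hε j => by
    have := div_pos (hd j) hε; linarith
  have hMpd : ∀ ε : ℝ, 0 < ε → (M ε).PosDef := by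
    intro ε hε
    rw [hM, hD]
    exact myPosDef_conj (Matrix.PosDef.diagonal fun j => inv_pos.2 (hden ε hε j)) X hXinj
  -- quadratic part
  set q : ℝ → ℝ := fun ε => X i ⬝ᵥ (M ε)⁻¹ *ᵥ X i with hq
  have hqpos : ∀ ε : ℝ, 0 < ε → 0 < q ε := by
    intro ε hε
    have := (hMpd ε hε).inv.dotProduct_mulVec_pos hxi
    simpa [hq] using this
  have hqlt : ∀ ε₁ ε₂ : ℝ, 0 < ε₁ → ε₁ < ε₂ → q ε₂ < q ε₁ := by
    intro ε₁ ε₂ h1 h12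
    have h2 : 0 < ε₂ := h1.trans h12
    have hdiff : (M ε₂ - M ε₁).PosDef := by
      have hsub : M ε₂ - M ε₁ =
          Xᵀ * Matrix.diagonal (fun j => (σsq + d j / ε₂)⁻¹ - (σsq + d j / ε₁)⁻¹) * X := by
        have hdg : (Matrix.diagonal fun j => (σsq + d j / ε₂)⁻¹ - (σsq + d j / ε₁)⁻¹) =
            Matrix.diagonal (fun j => (σsq + d j / ε₂)⁻¹) -
            Matrix.diagonal (fun j => (σsq + d j / ε₁)⁻¹) := by
          rw [← Matrix.diagonal_sub]
        simp only [hM, hD, hdg, Matrix.mul_sub, Matrix.sub_mul]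
      rw [hsub]
      refine myPosDef_conj (Matrix.PosDef.diagonal fun j => ?_) X hXinj
      have hlt : σsq + d j / ε₂ < σsq + d j / ε₁ := by
        have := div_lt_div_of_pos_left (hd j) h1 h12
        linarith
      have := inv_strictAnti₀ (hden ε₂ h2 j) hlt
      linarith
    have hpd := myInvDiff_posDef (hMpd ε₁ h1) (hMpd ε₂ h2) hdiff
    have := hpd.dotProduct_mulVec_pos hxi
    simp only [star_trivial, Matrix.sub_mulVec, dotProduct_sub] at this
    have : q ε₂ < q ε₁ := by simp only [hq]; linarith
    exact this
  -- scalar part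
  set s : ℝ → ℝ := fun ε => (1 - γi ε) ^ 2 with hs
  have hγlt : ∀ ε : ℝ, 0 < ε → γi ε < 1 := by
    intro ε hε
    rw [hγ]
    rw [div_lt_one (hden ε hε i)]
    have : 0 < d i / ε := div_pos (hd i) hε
    linarith
  have hspos : ∀ ε : ℝ, 0 < ε → 0 < s ε := by
    intro ε hε
    have := hγlt ε hε
    have h1 : 0 < 1 - γi ε := by linarith
    positivity
  have hslt : ∀ ε₁ ε₂ : ℝ, 0 < ε₁ → ε₁ < ε₂ → s ε₂ < s ε₁ := by
    intro ε₁ ε₂ h1 h12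
    have h2 : 0 < ε₂ := h1.trans h12
    have hγmono : γi ε₁ < γi ε₂ := by
      rw [hγ]
      have hlt : σsq + d i / ε₂ < σsq + d i / ε₁ := by
        have := div_lt_div_of_pos_left (hd i) h1 h12
        linarith
      exact div_lt_div_of_pos_left hσ (hden ε₂ h2 i) hlt
    have hb2 : 0 < 1 - γi ε₂ := by linarith [hγlt ε₂ h2]
    have : 1 - γi ε₂ < 1 - γi ε₁ := by linarith
    exact pow_lt_pow_left₀ this hb2.le (by norm_num)
  -- combine
  have key : ∀ ε₁ ε₂ : ℝ, 0 < ε₁ → ε₁ < ε₂ → g2 ε₂ < g2 ε₁ := by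
    intro ε₁ ε₂ h1 h12
    have h2 : 0 < ε₂ := h1.trans h12
    rw [hg2]
    exact mul_lt_mul (hslt ε₁ ε₂ h1 h12) (hqlt ε₁ ε₂ h1 h12).le (hqpos ε₂ h2)
      (hspos ε₁ h1).le
  constructor
  · intro a ha b hb hab
    exact key a b ha.1 hab
  · intro ε hε
    exact key ε 1 hε.1 hε.2
end

section
/- Let m ≥ 1, θ_1, …, θ_m ∈ ℝ, d_1, …, d_m > 0, ε ∈ (0,1). Suppose Y⁽¹⁾ and Y⁽²⁾ are independent random vectors in ℝ^m, where the Y⁽²⁾_i are mutually independent with Y⁽²⁾_i ~ N((1−ε)θ_i, (1−ε)d_i), and let θ̂⁽¹⁾ = g(Y⁽¹⁾) for a measurable g with E[(θ̂⁽¹⁾_i − θ_i)⁴] < ∞. Then the variance of MSÊ_ε := (1/m) Σ_i [(θ̂⁽¹⁾_i − Y⁽²⁾_i/(1−ε))² − d_i/(1−ε)] equals (2/m²) Σ_{i=1}^m [ (d_i/(1−ε))² + 2 (d_i/(1−ε)) E[(θ̂⁽¹⁾_i − θ_i)²] ] + Var[ (1/m) Σ_{i=1}^m (θ̂⁽¹⁾_i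 − θ_i)² ]. -/
open MeasureTheory ProbabilityTheory Real Filter Set
open scoped ENNReal NNReal

lemma aux_integrable_pow_mul_exp {b : ℝ} (hb : 0 < b) (n : ℕ) :
    Integrable (fun x : ℝ => x ^ n * Real.exp (-b * x ^ 2)) := by
  have hIoi : IntegrableOn (fun x : ℝ => x ^ n * Real.exp (-b * x ^ 2)) (Set.Ioi 0) := by
    refine (integrableOn_rpow_mul_exp_neg_mul_sq hb
      (s := (n : ℝ)) (by exact_mod_cast neg_one_lt_zero.trans_le (Nat.cast_nonneg n))).congr_fun ?_ measurableSet_Ioi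
    intro x hx
    simp [Real.rpow_natCast]
  have habs : Integrable (fun x : ℝ => |x| ^ n * Real.exp (-b * x ^ 2)) := by
    have hmeas : AEStronglyMeasurable (fun x : ℝ => |x| ^ n * Real.exp (-b * x ^ 2)) volume :=
      ((measurable_abs.pow_const n).mul
        ((measurable_id.pow_const 2).const_mul (-b)).exp).aestronglyMeasurable
    rw [← integrableOn_univ, ← Set.Iio_union_Ici (a := (0 : ℝ)), integrableOn_union,
      integrableOn_Ici_iff_integrableOn_Ioi]
    constructor
    · rw [← (Measure.measurePreserving_neg (volume : Measure ℝ)).integrableOn_comp_preimage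
        (Homeomorph.neg ℝ).measurableEmbedding]
      simp only [Function.comp_def, neg_sq, neg_preimage, neg_Iio, neg_neg, neg_zero, abs_neg]
      exact hIoi.congr_fun (fun x hx => by rw [abs_of_pos hx]) measurableSet_Ioi
    · exact hIoi.congr_fun (fun x hx => by rw [abs_of_pos hx]) measurableSet_Ioi
  refine habs.mono' ?_ ?_
  · exact (((measurable_id.pow_const n).mul
      ((measurable_id.pow_const 2).const_mul (-b)).exp)).aestronglyMeasurable
  · filter_upwards with x
    rw [Real.norm_eq_abs, abs_mul, abs_of_pos (Real.exp_pos _), abs_pow]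

lemma aux_moment_rec {b : ℝ} (hb : 0 < b) (n : ℕ) :
    (2 * b) * ∫ x : ℝ, x ^ (n + 2) * Real.exp (-b * x ^ 2)
      = (n + 1 : ℝ) * ∫ x : ℝ, x ^ n * Real.exp (-b * x ^ 2) := by
  set f : ℝ → ℝ := fun x => x ^ (n + 1) * Real.exp (-b * x ^ 2) with hf
  set f' : ℝ → ℝ := fun x =>
    (n + 1 : ℝ) * (x ^ n * Real.exp (-b * x ^ 2)) - 2 * b * (x ^ (n + 2) * Real.exp (-b * x ^ 2))
    with hf'
  have hderiv : ∀ x : ℝ, HasDerivAt f (f' x) x := by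
    intro x
    have h1 : HasDerivAt (fun x : ℝ => x ^ (n + 1)) ((n + 1 : ℝ) * x ^ n) x := by
      simpa using hasDerivAt_pow (n + 1) x
    have h2 : HasDerivAt (fun x : ℝ => Real.exp (-b * x ^ 2))
        (Real.exp (-b * x ^ 2) * (-b * (2 * x))) x := by
      have h3 : HasDerivAt (fun x : ℝ => -b * x ^ 2) (-b * (2 * x)) x := by
        simpa using (hasDerivAt_pow 2 x).const_mul (-b)
      exact h3.exp
    have : HasDerivAt f (((n + 1 : ℝ) * x ^ n) * Real.exp (-b * x ^ 2)
        + x ^ (n + 1) * (Real.exp (-b * x ^ 2) * (-b * (2 * x)))) x := h1.mul h2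
    convert this using 1
    simp only [f']
    ring
  have htop : Tendsto f atTop (nhds 0) := by
    have hhalf : Tendsto (fun x : ℝ => Real.exp (-(1/2) * x)) atTop (nhds 0) := by
      have h2 : Tendsto (fun x : ℝ => (1/2 : ℝ) * x) atTop atTop :=
        tendsto_id.const_mul_atTop (by norm_num)
      have := Real.tendsto_exp_neg_atTop_nhds_zero.comp h2
      simpa [Function.comp_def, neg_mul] using this
    have h := (rpow_mul_exp_neg_mul_sq_isLittleO_exp_neg hb (n + 1 : ℝ)).tendsto_zero_of_tendsto
      hhalf
    refine Tendsto.congr' ?_ h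
    filter_upwards [eventually_gt_atTop (0 : ℝ)] with x hx
    have : x ^ ((n : ℝ) + 1) = x ^ (n + 1) := by
      rw [← Real.rpow_natCast x (n + 1)]
      push_cast
      ring_nf
    simp only [f, this]
  have hbot : Tendsto f atBot (nhds 0) := by
    have hcomp : Tendsto (fun x : ℝ => f (-x)) atTop (nhds 0) := by
      have : (fun x : ℝ => f (-x)) = fun x => (-1 : ℝ) ^ (n + 1) * f x := by
        funext x; simp only [hf]; ring
      rw [this]
      have h0 := htop.const_mul ((-1 : ℝ) ^ (n + 1))
      rw [mul_zero] at h0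
      exact h0
    have := hcomp.comp tendsto_neg_atBot_atTop
    simpa [Function.comp_def] using this
  have hf'int : Integrable f' volume :=
    ((aux_integrable_pow_mul_exp hb n).const_mul _).sub
      ((aux_integrable_pow_mul_exp hb (n + 2)).const_mul _)
  have hIoi : ∫ x in Set.Ioi (0:ℝ), f' x = 0 - f 0 :=
    MeasureTheory.integral_Ioi_of_hasDerivAt_of_tendsto' (fun x _ => hderiv x)
      hf'int.integrableOn htop
  have hIic : ∫ x in Set.Iic (0:ℝ), f' x = f 0 - 0 :=
    MeasureTheory.integral_Iic_of_hasDerivAt_of_tendsto' (fun x _ => hderiv x)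
      hf'int.integrableOn hbot
  have hzero : ∫ x : ℝ, f' x = 0 := by
    rw [← intervalIntegral.integral_Iic_add_Ioi (b := (0:ℝ)) hf'int.integrableOn
      hf'int.integrableOn, hIoi, hIic]
    ring
  have hsplit : ∫ x : ℝ, f' x
      = (n + 1 : ℝ) * (∫ x : ℝ, x ^ n * Real.exp (-b * x ^ 2))
        - 2 * b * ∫ x : ℝ, x ^ (n + 2) * Real.exp (-b * x ^ 2) := by
    rw [hf']
    rw [MeasureTheory.integral_sub ((aux_integrable_pow_mul_exp hb n).const_mul _)
      ((aux_integrable_pow_mul_exp hb (n + 2)).const_mul _),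
      MeasureTheory.integral_const_mul, MeasureTheory.integral_const_mul]
  rw [hsplit] at hzero
  linarith

lemma aux_moment_odd {b : ℝ} {n : ℕ} (hn : Odd n) :
    ∫ x : ℝ, x ^ n * Real.exp (-b * x ^ 2) = 0 := by
  have h : (∫ x : ℝ, x ^ n * Real.exp (-b * x ^ 2))
      = - ∫ x : ℝ, x ^ n * Real.exp (-b * x ^ 2) := by
    conv_lhs => rw [← MeasureTheory.integral_neg_eq_self
      (fun x : ℝ => x ^ n * Real.exp (-b * x ^ 2)) volume]
    rw [← MeasureTheory.integral_neg]
    congr 1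
    funext x
    rw [hn.neg_pow, neg_sq]
    ring
  linarith

lemma aux_toNNReal_ne_zero {t : ℝ} (ht : 0 < t) : Real.toNNReal t ≠ 0 := by
  simp [Real.toNNReal_eq_zero, not_le, ht]

lemma aux_gauss_eq {t : ℝ} (ht : 0 < t) :
    gaussianReal 0 t.toNNReal
      = volume.withDensity (fun x => ((gaussianPDFReal 0 t.toNNReal x).toNNReal : ℝ≥0∞)) := by
  rw [gaussianReal_of_var_ne_zero 0 (aux_toNNReal_ne_zero ht)]
  rfl

lemma aux_gauss_int {t : ℝ} (ht : 0 < t) (h : ℝ → ℝ) :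
    ∫ x, h x ∂(gaussianReal 0 t.toNNReal)
      = ∫ x, gaussianPDFReal 0 t.toNNReal x * h x := by
  rw [aux_gauss_eq ht, integral_withDensity_eq_integral_smul
    (measurable_gaussianPDFReal 0 t.toNNReal).real_toNNReal h]
  congr 1
  funext x
  rw [NNReal.smul_def, smul_eq_mul, Real.coe_toNNReal _ (gaussianPDFReal_nonneg 0 _ x)]

lemma aux_gauss_integrable_iff {t : ℝ} (ht : 0 < t) (h : ℝ → ℝ) :
    Integrable h (gaussianReal 0 t.toNNReal)
      ↔ Integrable (fun x => gaussianPDFReal 0 t.toNNReal x * h x) volume := by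
  rw [aux_gauss_eq ht, integrable_withDensity_iff_integrable_smul
    (measurable_gaussianPDFReal 0 t.toNNReal).real_toNNReal]
  refine integrable_congr (Filter.Eventually.of_forall fun x => ?_)
  show (gaussianPDFReal 0 t.toNNReal x).toNNReal • h x = _
  rw [NNReal.smul_def, smul_eq_mul, Real.coe_toNNReal _ (gaussianPDFReal_nonneg 0 _ x)]

lemma aux_gauss_pdf_eq {t : ℝ} (ht : 0 < t) (k : ℕ) (x : ℝ) :
    gaussianPDFReal 0 t.toNNReal x * x ^ k
      = (Real.sqrt (2 * π * t))⁻¹ * (x ^ k * Real.exp (-(2*t)⁻¹ * x ^ 2)) := by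
  rw [gaussianPDFReal]
  rw [Real.coe_toNNReal _ ht.le]
  have harg : -(x - 0) ^ 2 / (2 * t) = -(2*t)⁻¹ * x ^ 2 := by
    rw [sub_zero]
    ring
  rw [harg]
  ring

lemma aux_gauss_integrable_pow {t : ℝ} (ht : 0 < t) (k : ℕ) :
    Integrable (fun x : ℝ => x ^ k) (gaussianReal 0 t.toNNReal) := by
  rw [aux_gauss_integrable_iff ht]
  have hb : (0:ℝ) < (2*t)⁻¹ := by positivity
  refine Integrable.congr ((aux_integrable_pow_mul_exp hb k).const_mul
    (Real.sqrt (2 * π * t))⁻¹) ?_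
  filter_upwards with x
  rw [aux_gauss_pdf_eq ht]

lemma aux_gauss_moments {t : ℝ} (ht : 0 < t) :
    (∫ x, x ∂(gaussianReal 0 t.toNNReal)) = 0
    ∧ (∫ x, x ^ 2 ∂(gaussianReal 0 t.toNNReal)) = t
    ∧ (∫ x, x ^ 3 ∂(gaussianReal 0 t.toNNReal)) = 0
    ∧ (∫ x, x ^ 4 ∂(gaussianReal 0 t.toNNReal)) = 3 * t ^ 2 := by
  have hb : (0:ℝ) < (2*t)⁻¹ := by positivity
  set b : ℝ := (2*t)⁻¹ with hbdef
  set C : ℝ := (Real.sqrt (2 * π * t))⁻¹ with hC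
  set I : ℕ → ℝ := fun k => ∫ x : ℝ, x ^ k * Real.exp (-b * x ^ 2) with hI
  have hm : ∀ k : ℕ, (∫ x, x ^ k ∂(gaussianReal 0 t.toNNReal)) = C * I k := by
    intro k
    rw [aux_gauss_int ht]
    simp_rw [aux_gauss_pdf_eq ht]
    rw [MeasureTheory.integral_const_mul]
  have hnorm : C * I 0 = 1 := by
    have h1 : ∫ x, (1:ℝ) ∂(gaussianReal 0 t.toNNReal) = 1 := by simp
    have h2 := hm 0
    simp only [pow_zero] at h2
    rw [h2] at h1
    exact h1
  have hrec0 := aux_moment_rec hb 0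
  have hrec2 := aux_moment_rec hb 2
  have hodd1 : I 1 = 0 := aux_moment_odd ⟨0, by ring⟩
  have hodd3 : I 3 = 0 := aux_moment_odd ⟨1, by ring⟩
  have h2b : 2 * b = t⁻¹ := by
    rw [hbdef]
    field_simp
  have htne : t ≠ 0 := ht.ne'
  refine ⟨?_, ?_, ?_, ?_⟩
  · rw [show (fun x : ℝ => x) = fun x : ℝ => x ^ 1 by funext x; ring]
    rw [hm 1, hodd1, mul_zero]
  · rw [hm 2]
    have : I 2 = t * I 0 := by
      rw [h2b] at hrec0
      have : t⁻¹ * I (0 + 2) = (0 + 1 : ℝ) * I 0 := by exact_mod_cast hrec0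
      field_simp at this ⊢
      linarith [this]
    rw [this]
    calc C * (t * I 0) = t * (C * I 0) := by ring
    _ = t := by rw [hnorm]; ring
  · rw [hm 3, hodd3, mul_zero]
  · rw [hm 4]
    have h2 : I 2 = t * I 0 := by
      rw [h2b] at hrec0
      have : t⁻¹ * I (0 + 2) = (0 + 1 : ℝ) * I 0 := by exact_mod_cast hrec0
      field_simp at this ⊢
      linarith [this]
    have h4 : I 4 = 3 * t * I 2 := by
      rw [h2b] at hrec2
      have : t⁻¹ * I (2 + 2) = (2 + 1 : ℝ) * I 2 := by exact_mod_cast hrec2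
      field_simp at this ⊢
      linarith [this]
    rw [h4, h2]
    calc C * (3 * t * (t * I 0)) = 3 * t ^ 2 * (C * I 0) := by ring
    _ = 3 * t ^ 2 := by rw [hnorm]; ring

lemma aux_L2_mul {Ω : Type*} [MeasurableSpace Ω] {P : Measure Ω} {f g : Ω → ℝ}
    (hf : MemLp f 2 P) (hg : MemLp g 2 P) :
    Integrable (fun ω => f ω * g ω) P := by
  rw [← memLp_one_iff_integrable]
  exact MemLp.smul hg hf

set_option maxHeartbeats 2000000 in
/-- Variance decomposition of the data-thinning MSE estimator. Under the
thinning setup (independent `Y⁽¹⁾, Y⁽²⁾`; test coordinates mutually independent with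
`Y⁽²⁾ᵢ ~ N((1−ε)θᵢ, (1−ε)dᵢ)`; `θ̂⁽¹⁾ = g(Y⁽¹⁾)` with finite fourth moments),
`Var[MSÊ_ε] = (2/m²) Σᵢ [(dᵢ/(1−ε))² + 2(dᵢ/(1−ε)) E[(θ̂ᵢ−θᵢ)²]]
  + Var[(1/m) Σᵢ (θ̂ᵢ−θᵢ)²]`. -/
theorem mse_estimator_variance
    {Ω : Type*} [MeasurableSpace Ω] (P : Measure Ω) [IsProbabilityMeasure P]
    (m : ℕ) (hm : 1 ≤ m) (θ d : Fin m → ℝ) (hd : ∀ i, 0 < d i)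
    (ε : ℝ) (hε : ε ∈ Set.Ioo (0 : ℝ) 1)
    (Y1 Y2 : Ω → Fin m → ℝ) (hY1m : Measurable Y1) (hY2m : Measurable Y2)
    (hindep : IndepFun Y1 Y2 P)
    (hY2indep : iIndepFun
      (fun i ω => Y2 ω i) P)
    (hY2law : ∀ i, P.map (fun ω => Y2 ω i)
      = gaussianReal ((1 - ε) * θ i) (Real.toNNReal ((1 - ε) * d i)))
    (g : (Fin m → ℝ) → Fin m → ℝ) (hg : Measurable g)
    (θhat : Ω → Fin m → ℝ) (hθhat : θhat = g ∘ Y1)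
    (hint : ∀ i, Integrable (fun ω => (θhat ω i - θ i) ^ 4) P) :
    variance (fun ω =>
        (1 / (m : ℝ)) * ∑ i, ((θhat ω i - Y2 ω i / (1 - ε)) ^ 2 - d i / (1 - ε))) P
      = (2 / (m : ℝ) ^ 2) * ∑ i,
          ((d i / (1 - ε)) ^ 2
            + 2 * (d i / (1 - ε)) * ∫ ω, (θhat ω i - θ i) ^ 2 ∂P)
        + variance (fun ω => (1 / (m : ℝ)) * ∑ i, (θhat ω i - θ i) ^ 2) P := by
  subst hθhat
  obtain ⟨hε0, hε1⟩ := hε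
  set c : ℝ := 1 - ε with hcdef
  have hc : 0 < c := by simp only [hcdef]; linarith
  have hcne : c ≠ 0 := hc.ne'
  have hv : ∀ i, 0 < d i / c := fun i => div_pos (hd i) hc
  -- abbreviations
  set a : Fin m → Ω → ℝ := fun i ω => g (Y1 ω) i - θ i with hadef
  set z : Fin m → Ω → ℝ := fun i ω => Y2 ω i / c - θ i with hzdef
  set W : Fin m → Ω → ℝ := fun i ω => (a i ω - z i ω) ^ 2 - d i / c with hWdef
  set Q : Fin m → Ω → ℝ := fun i ω => (a i ω) ^ 2 with hQdef
  -- rewrite the goal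
  have hMSEfun : (fun ω => (1 / (m : ℝ)) * ∑ i, (((g ∘ Y1) ω i - Y2 ω i / c) ^ 2 - d i / c))
      = fun ω => (1 / (m : ℝ)) * ∑ i, W i ω := by
    funext ω; congr 1
    refine Finset.sum_congr rfl fun i _ => ?_
    simp only [hWdef, hadef, hzdef, Function.comp_apply]
    ring
  have hSfun : (fun ω => (1 / (m : ℝ)) * ∑ i, ((g ∘ Y1) ω i - θ i) ^ 2)
      = fun ω => (1 / (m : ℝ)) * ∑ i, Q i ω := by
    funext ω; congr 1
  have hIfun : ∀ i, (∫ ω, ((g ∘ Y1) ω i - θ i) ^ 2 ∂P) = ∫ ω, Q i ω ∂P := fun i => rfl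
  rw [hMSEfun, hSfun]
  simp only [hIfun]
  -- measurability
  have hgm : ∀ i, Measurable fun y : Fin m → ℝ => g y i - θ i :=
    fun i => ((measurable_pi_apply i).comp hg).sub_const _
  have hym : ∀ i, Measurable fun x : ℝ => x / c - θ i :=
    fun i => (measurable_id.div_const c).sub_const _
  have ham : ∀ i, Measurable (a i) := fun i => (hgm i).comp hY1m
  have hY2i : ∀ i, Measurable fun ω => Y2 ω i := fun i => (measurable_pi_apply i).comp hY2m
  have hzm : ∀ i, Measurable (z i) := fun i => (hym i).comp (hY2i i)
  -- law of z i
  have hzlaw : ∀ i, P.map (z i) = gaussianReal 0 (d i / c).toNNReal := by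
    intro i
    have hmap1 : P.map (z i) = (P.map (fun ω => Y2 ω i)).map (fun x => x / c - θ i) := by
      rw [Measure.map_map (hym i) (hY2i i)]
      rfl
    rw [hmap1, hY2law i]
    have hcomp : (fun x : ℝ => x / c - θ i) = (fun x : ℝ => x + -θ i) ∘ (fun x : ℝ => c⁻¹ * x) := by
      funext x
      simp only [Function.comp_apply]
      field_simp
      ring
    rw [hcomp, ← Measure.map_map (measurable_add_const _) (measurable_const_mul _),
      gaussianReal_map_const_mul, gaussianReal_map_add_const]
    congr 1
    · field_simp
      ring
    · refine NNReal.coe_injective ?_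
      push_cast
      rw [Real.coe_toNNReal _ (mul_pos hc (hd i)).le,
        Real.coe_toNNReal _ (hv i).le]
      field_simp
  -- integrability and moments of z
  have hIZ : ∀ i (k : ℕ), Integrable (fun ω => (z i ω) ^ k) P := by
    intro i k
    have h := aux_gauss_integrable_pow (hv i) k
    rw [← hzlaw i] at h
    exact (integrable_map_measure ((measurable_id.pow_const k).aestronglyMeasurable)
      (hzm i).aemeasurable).mp h
  have hzmap : ∀ i (k : ℕ), (∫ ω, (z i ω) ^ k ∂P) = ∫ x, x ^ k ∂(gaussianReal 0 (d i / c).toNNReal) := by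
    intro i k
    rw [← hzlaw i]
    exact (integral_map (hzm i).aemeasurable
      ((measurable_id.pow_const k).aestronglyMeasurable)).symm
  have hz1 : ∀ i, (∫ ω, z i ω ∂P) = 0 := by
    intro i
    have h := (aux_gauss_moments (hv i)).1
    have h2 := hzmap i 1
    simp only [pow_one] at h2
    rw [h2, h]
  have hz2 : ∀ i, (∫ ω, (z i ω) ^ 2 ∂P) = d i / c := by
    intro i
    rw [hzmap i 2, (aux_gauss_moments (hv i)).2.1]
  have hz3 : ∀ i, (∫ ω, (z i ω) ^ 3 ∂P) = 0 := by
    intro i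
    rw [hzmap i 3, (aux_gauss_moments (hv i)).2.2.1]
  have hz4 : ∀ i, (∫ ω, (z i ω) ^ 4 ∂P) = 3 * (d i / c) ^ 2 := by
    intro i
    rw [hzmap i 4, (aux_gauss_moments (hv i)).2.2.2]
  -- integrability of a
  have hIA4 : ∀ i, Integrable (fun ω => (a i ω) ^ 4) P := fun i => hint i
  have hIA2 : ∀ i, Integrable (fun ω => (a i ω) ^ 2) P := by
    intro i
    refine ((integrable_const (1:ℝ)).add (hIA4 i)).mono'
      (((ham i).pow_const 2).aestronglyMeasurable) ?_
    filter_upwards with ω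
    have h1 : (0:ℝ) ≤ (a i ω)^2 := sq_nonneg _
    have h2 : (a i ω)^2 ≤ 1 + (a i ω)^4 := by nlinarith [sq_nonneg ((a i ω)^2 - 1)]
    rw [Real.norm_eq_abs, abs_of_nonneg h1]
    simpa using h2
  have hIA1 : ∀ i, Integrable (a i) P := by
    intro i
    refine ((integrable_const (1:ℝ)).add (hIA2 i)).mono' ((ham i).aestronglyMeasurable) ?_
    filter_upwards with ω
    have h2 : |a i ω| ≤ 1 + (a i ω)^2 := by nlinarith [sq_nonneg (|a i ω| - 1), abs_nonneg (a i ω), sq_abs (a i ω)]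
    simpa [Real.norm_eq_abs] using h2
  -- MemLp
  have hLA1 : ∀ i, MemLp (a i) 2 P := fun i =>
    (memLp_two_iff_integrable_sq (ham i).aestronglyMeasurable).mpr (hIA2 i)
  have hLA2 : ∀ i, MemLp (fun ω => (a i ω) ^ 2) 2 P := by
    intro i
    refine (memLp_two_iff_integrable_sq
      (((ham i).pow_const 2).aestronglyMeasurable)).mpr ?_
    refine (hIA4 i).congr (Filter.Eventually.of_forall fun ω => ?_)
    ring
  have hLZ1 : ∀ i, MemLp (z i) 2 P := fun i =>
    (memLp_two_iff_integrable_sq (hzm i).aestronglyMeasurable).mpr (hIZ i 2)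
  have hLZ2 : ∀ i, MemLp (fun ω => (z i ω) ^ 2) 2 P := by
    intro i
    refine (memLp_two_iff_integrable_sq
      (((hzm i).pow_const 2).aestronglyMeasurable)).mpr ?_
    refine (hIZ i 4).congr (Filter.Eventually.of_forall fun ω => ?_)
    ring
  -- independence toolkit
  have hAZ : ∀ (F G : (Fin m → ℝ) → ℝ), Measurable F → Measurable G →
      IndepFun (fun ω => F (Y1 ω)) (fun ω => G (Y2 ω)) P :=
    fun F G hF hG => hindep.comp hF hG
  have hAZmul : ∀ (F G : (Fin m → ℝ) → ℝ), Measurable F → Measurable G →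
      ∫ ω, F (Y1 ω) * G (Y2 ω) ∂P = (∫ ω, F (Y1 ω) ∂P) * ∫ ω, G (Y2 ω) ∂P :=
    fun F G hF hG => (hAZ F G hF hG).integral_fun_mul_eq_mul_integral
      ((hF.comp hY1m)).aestronglyMeasurable ((hG.comp hY2m)).aestronglyMeasurable
  have hAZint : ∀ (F G : (Fin m → ℝ) → ℝ), Measurable F → Measurable G →
      Integrable (fun ω => F (Y1 ω)) P → Integrable (fun ω => G (Y2 ω)) P →
      Integrable (fun ω => F (Y1 ω) * G (Y2 ω)) P :=
    fun F G hF hG hFi hGi => (hAZ F G hF hG).integrable_mul hFi hGi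
  have hZZmul : ∀ (i j : Fin m), i ≠ j → ∀ (k l : ℕ),
      ∫ ω, (z i ω) ^ k * (z j ω) ^ l ∂P
        = (∫ ω, (z i ω) ^ k ∂P) * ∫ ω, (z j ω) ^ l ∂P := by
    intro i j hij k l
    have hind : IndepFun (fun ω => (z i ω) ^ k) (fun ω => (z j ω) ^ l) P :=
      (hY2indep.indepFun hij).comp ((hym i).pow_const k) ((hym j).pow_const l)
    exact hind.integral_fun_mul_eq_mul_integral (((hzm i).pow_const k)).aestronglyMeasurable
      (((hzm j).pow_const l)).aestronglyMeasurable
  have hZZint : ∀ (i j : Fin m), i ≠ j → ∀ (k l : ℕ),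
      Integrable (fun ω => (z i ω) ^ k * (z j ω) ^ l) P := by
    intro i j hij k l
    have hind : IndepFun (fun ω => (z i ω) ^ k) (fun ω => (z j ω) ^ l) P :=
      (hY2indep.indepFun hij).comp ((hym i).pow_const k) ((hym j).pow_const l)
    exact hind.integrable_mul (hIZ i k) (hIZ j l)
  have hymv : ∀ i, Measurable fun y : Fin m → ℝ => y i / c - θ i :=
    fun i => ((measurable_pi_apply (X := fun _ : Fin m => ℝ) i).div_const c).sub_const _
  have hIZ1 : ∀ i, Integrable (z i) P := by
    intro i
    have h := hIZ i 1
    simpa using h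
  -- atom integrals
  have haz : ∀ i j, ∫ ω, a i ω * z j ω ∂P = 0 := by
    intro i j
    have h : ∫ ω, a i ω * z j ω ∂P = (∫ ω, a i ω ∂P) * ∫ ω, z j ω ∂P :=
      hAZmul (fun y => g y i - θ i) (fun y => y j / c - θ j) (hgm i) (hymv j)
    rw [h, hz1 j, mul_zero]
  have hIaz : ∀ i j, Integrable (fun ω => a i ω * z j ω) P := fun i j =>
    hAZint (fun y => g y i - θ i) (fun y => y j / c - θ j) (hgm i) (hymv j)
      (hIA1 i) (hIZ1 j)
  have ha2z2 : ∀ i j, ∫ ω, (a i ω) ^ 2 * (z j ω) ^ 2 ∂P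
      = (∫ ω, Q i ω ∂P) * (d j / c) := by
    intro i j
    have h : ∫ ω, (a i ω) ^ 2 * (z j ω) ^ 2 ∂P
        = (∫ ω, (a i ω) ^ 2 ∂P) * ∫ ω, (z j ω) ^ 2 ∂P :=
      hAZmul (fun y => (g y i - θ i) ^ 2) (fun y => (y j / c - θ j) ^ 2)
        ((hgm i).pow_const 2) ((hymv j).pow_const 2)
    rw [h, hz2 j]
  have hIa2z2 : ∀ i j, Integrable (fun ω => (a i ω) ^ 2 * (z j ω) ^ 2) P := fun i j =>
    hAZint (fun y => (g y i - θ i) ^ 2) (fun y => (y j / c - θ j) ^ 2)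
      ((hgm i).pow_const 2) ((hymv j).pow_const 2) (hIA2 i) (hIZ j 2)
  have hIAA : ∀ i j, Integrable (fun ω => a i ω * a j ω) P := fun i j =>
    aux_L2_mul (hLA1 i) (hLA1 j)
  have hIA2A : ∀ i j, Integrable (fun ω => (a i ω) ^ 2 * a j ω) P := fun i j =>
    aux_L2_mul (hLA2 i) (hLA1 j)
  have ha2az : ∀ i j, ∫ ω, ((a i ω) ^ 2 * a j ω) * z j ω ∂P = 0 := by
    intro i j
    have h : ∫ ω, ((a i ω) ^ 2 * a j ω) * z j ω ∂P
        = (∫ ω, (a i ω) ^ 2 * a j ω ∂P) * ∫ ω, z j ω ∂P :=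
      hAZmul (fun y => (g y i - θ i) ^ 2 * (g y j - θ j)) (fun y => y j / c - θ j)
        (((hgm i).pow_const 2).mul (hgm j)) (hymv j)
    rw [h, hz1 j, mul_zero]
  have hIa2az : ∀ i j, Integrable (fun ω => ((a i ω) ^ 2 * a j ω) * z j ω) P := fun i j =>
    hAZint (fun y => (g y i - θ i) ^ 2 * (g y j - θ j)) (fun y => y j / c - θ j)
      (((hgm i).pow_const 2).mul (hgm j)) (hymv j) (hIA2A i j) (hIZ1 j)
  have haz3 : ∀ i, ∫ ω, a i ω * (z i ω) ^ 3 ∂P = 0 := by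
    intro i
    have h : ∫ ω, a i ω * (z i ω) ^ 3 ∂P
        = (∫ ω, a i ω ∂P) * ∫ ω, (z i ω) ^ 3 ∂P :=
      hAZmul (fun y => g y i - θ i) (fun y => (y i / c - θ i) ^ 3) (hgm i)
        ((hymv i).pow_const 3)
    rw [h, hz3 i, mul_zero]
  have hIaz3 : ∀ i, Integrable (fun ω => a i ω * (z i ω) ^ 3) P := fun i =>
    hAZint (fun y => g y i - θ i) (fun y => (y i / c - θ i) ^ 3) (hgm i)
      ((hymv i).pow_const 3) (hIA1 i) (hIZ i 3)
  -- mixed coordinates, i ≠ j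
  have hzz0 : ∀ i j, i ≠ j → ∫ ω, z i ω * z j ω ∂P = 0 := by
    intro i j hij
    have h := hZZmul i j hij 1 1
    simp only [pow_one] at h
    rw [h, hz1 i, zero_mul]
  have hzz20 : ∀ i j, i ≠ j → ∫ ω, (z i ω) ^ 2 * z j ω ∂P = 0 := by
    intro i j hij
    have h := hZZmul i j hij 2 1
    simp only [pow_one] at h
    rw [h, hz1 j, mul_zero]
  have hzz02 : ∀ i j, i ≠ j → ∫ ω, z i ω * (z j ω) ^ 2 ∂P = 0 := by
    intro i j hij
    have h := hZZmul i j hij 1 2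
    simp only [pow_one] at h
    rw [h, hz1 i, zero_mul]
  have hz2z2 : ∀ i j, i ≠ j → ∫ ω, (z i ω) ^ 2 * (z j ω) ^ 2 ∂P
      = (d i / c) * (d j / c) := by
    intro i j hij
    rw [hZZmul i j hij 2 2, hz2 i, hz2 j]
  have haazz : ∀ i j, i ≠ j → ∫ ω, (a i ω * a j ω) * (z i ω * z j ω) ∂P = 0 := by
    intro i j hij
    have h : ∫ ω, (a i ω * a j ω) * (z i ω * z j ω) ∂P
        = (∫ ω, a i ω * a j ω ∂P) * ∫ ω, z i ω * z j ω ∂P :=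
      hAZmul (fun y => (g y i - θ i) * (g y j - θ j))
        (fun y => (y i / c - θ i) * (y j / c - θ j))
        ((hgm i).mul (hgm j)) ((hymv i).mul (hymv j))
    rw [h, hzz0 i j hij, mul_zero]
  have hIaazz : ∀ i j, i ≠ j →
      Integrable (fun ω => (a i ω * a j ω) * (z i ω * z j ω)) P := by
    intro i j hij
    refine hAZint (fun y => (g y i - θ i) * (g y j - θ j))
      (fun y => (y i / c - θ i) * (y j / c - θ j))
      ((hgm i).mul (hgm j)) ((hymv i).mul (hymv j)) (hIAA i j) ?_
    have h := hZZint i j hij 1 1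
    simpa using h
  have hazz2 : ∀ i j, i ≠ j → ∫ ω, a i ω * (z i ω * (z j ω) ^ 2) ∂P = 0 := by
    intro i j hij
    have h : ∫ ω, a i ω * (z i ω * (z j ω) ^ 2) ∂P
        = (∫ ω, a i ω ∂P) * ∫ ω, z i ω * (z j ω) ^ 2 ∂P :=
      hAZmul (fun y => g y i - θ i)
        (fun y => (y i / c - θ i) * (y j / c - θ j) ^ 2)
        (hgm i) ((hymv i).mul ((hymv j).pow_const 2))
    rw [h, hzz02 i j hij, mul_zero]
  have hIazz2 : ∀ i j, i ≠ j →
      Integrable (fun ω => a i ω * (z i ω * (z j ω) ^ 2)) P := by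
    intro i j hij
    refine hAZint (fun y => g y i - θ i)
      (fun y => (y i / c - θ i) * (y j / c - θ j) ^ 2)
      (hgm i) ((hymv i).mul ((hymv j).pow_const 2)) (hIA1 i) ?_
    have h := hZZint i j hij 1 2
    simpa using h
  have haz2z : ∀ i j, i ≠ j → ∫ ω, a j ω * ((z i ω) ^ 2 * z j ω) ∂P = 0 := by
    intro i j hij
    have h : ∫ ω, a j ω * ((z i ω) ^ 2 * z j ω) ∂P
        = (∫ ω, a j ω ∂P) * ∫ ω, (z i ω) ^ 2 * z j ω ∂P :=
      hAZmul (fun y => g y j - θ j)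
        (fun y => (y i / c - θ i) ^ 2 * (y j / c - θ j))
        (hgm j) (((hymv i).pow_const 2).mul (hymv j))
    rw [h, hzz20 i j hij, mul_zero]
  have hIaz2z : ∀ i j, i ≠ j →
      Integrable (fun ω => a j ω * ((z i ω) ^ 2 * z j ω)) P := by
    intro i j hij
    refine hAZint (fun y => g y j - θ j)
      (fun y => (y i / c - θ i) ^ 2 * (y j / c - θ j))
      (hgm j) (((hymv i).pow_const 2).mul (hymv j)) (hIA1 j) ?_
    have h := hZZint i j hij 2 1
    simpa using h
  -- R functions and L2 memberships
  set R : Fin m → Ω → ℝ := fun i ω => (z i ω) ^ 2 - 2 * (a i ω * z i ω) - d i / c with hRdef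
  have hLaz : ∀ i, MemLp (fun ω => a i ω * z i ω) 2 P := by
    intro i
    refine (memLp_two_iff_integrable_sq
      (((ham i).mul (hzm i)).aestronglyMeasurable)).mpr ?_
    refine (hIa2z2 i i).congr (Filter.Eventually.of_forall fun ω => ?_)
    simp only [Pi.mul_apply]
    ring
  have hLQ : ∀ i, MemLp (Q i) 2 P := fun i => hLA2 i
  have hLR : ∀ i, MemLp (R i) 2 P := by
    intro i
    have h : MemLp (fun ω => (z i ω) ^ 2 - 2 * (a i ω * z i ω) - (d i / c)) 2 P :=
      ((hLZ2 i).sub ((hLaz i).const_mul 2)).sub (memLp_const _)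
    exact h
  have hLW : ∀ i, MemLp (W i) 2 P := by
    intro i
    have h : MemLp (fun ω => Q i ω + R i ω) 2 P := (hLQ i).add (hLR i)
    refine h.ae_eq (Filter.Eventually.of_forall fun ω => ?_)
    simp only [hQdef, hRdef, hWdef]
    ring
  have hIW : ∀ i, Integrable (W i) P := fun i => (hLW i).integrable one_le_two
  have hIQ : ∀ i, Integrable (Q i) P := fun i => (hLQ i).integrable one_le_two
  -- key expectation: E[Q i * R j] = 0
  have hQR : ∀ i j, ∫ ω, Q i ω * R j ω ∂P = 0 := by
    intro i j
    have e : (fun ω => Q i ω * R j ω)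
        = fun ω => (a i ω) ^ 2 * (z j ω) ^ 2
            - 2 * (((a i ω) ^ 2 * a j ω) * z j ω) - (d j / c) * (a i ω) ^ 2 := by
      funext ω
      simp only [hQdef, hRdef]
      ring
    have j1 : Integrable (fun ω => (a i ω) ^ 2 * (z j ω) ^ 2
        - 2 * (((a i ω) ^ 2 * a j ω) * z j ω)) P :=
      (hIa2z2 i j).sub ((hIa2az i j).const_mul 2)
    rw [e, integral_sub j1 ((hIA2 i).const_mul _),
      integral_sub (hIa2z2 i j) ((hIa2az i j).const_mul 2),
      integral_const_mul, integral_const_mul, ha2z2 i j, ha2az i j]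
    simp only [hQdef]
    ring
  have hIQR : ∀ i j, Integrable (fun ω => Q i ω * R j ω) P := fun i j =>
    aux_L2_mul (hLQ i) (hLR j)
  -- key expectation: E[R i * R j]
  have hRRne : ∀ i j, i ≠ j → ∫ ω, R i ω * R j ω ∂P = 0 := by
    intro i j hij
    have e : (fun ω => R i ω * R j ω)
        = fun ω => (z i ω) ^ 2 * (z j ω) ^ 2
            - 2 * (a j ω * ((z i ω) ^ 2 * z j ω))
            - (d j / c) * (z i ω) ^ 2
            - 2 * (a i ω * (z i ω * (z j ω) ^ 2))
            + 4 * ((a i ω * a j ω) * (z i ω * z j ω))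
            + 2 * (d j / c) * (a i ω * z i ω)
            - (d i / c) * (z j ω) ^ 2
            + 2 * (d i / c) * (a j ω * z j ω)
            + (d i / c) * (d j / c) := by
      funext ω
      simp only [hRdef]
      ring
    have i1 := hZZint i j hij 2 2
    have i2 := (hIaz2z i j hij).const_mul 2
    have i3 := (hIZ i 2).const_mul (d j / c)
    have i4 := (hIazz2 i j hij).const_mul 2
    have i5 := (hIaazz i j hij).const_mul 4
    have i6 := (hIaz i i).const_mul (2 * (d j / c))
    have i7 := (hIZ j 2).const_mul (d i / c)
    have i8 := (hIaz j j).const_mul (2 * (d i / c))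
    have i9 : Integrable (fun _ : Ω => (d i / c) * (d j / c)) P := integrable_const _
    have k2 : Integrable (fun ω => (z i ω) ^ 2 * (z j ω) ^ 2
        - 2 * (a j ω * ((z i ω) ^ 2 * z j ω))) P := i1.sub i2
    have k3 : Integrable (fun ω => (z i ω) ^ 2 * (z j ω) ^ 2
        - 2 * (a j ω * ((z i ω) ^ 2 * z j ω))
        - (d j / c) * (z i ω) ^ 2) P := k2.sub i3
    have k4 : Integrable (fun ω => (z i ω) ^ 2 * (z j ω) ^ 2
        - 2 * (a j ω * ((z i ω) ^ 2 * z j ω))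
        - (d j / c) * (z i ω) ^ 2
        - 2 * (a i ω * (z i ω * (z j ω) ^ 2))) P := k3.sub i4
    have k5 : Integrable (fun ω => (z i ω) ^ 2 * (z j ω) ^ 2
        - 2 * (a j ω * ((z i ω) ^ 2 * z j ω))
        - (d j / c) * (z i ω) ^ 2
        - 2 * (a i ω * (z i ω * (z j ω) ^ 2))
        + 4 * ((a i ω * a j ω) * (z i ω * z j ω))) P := k4.add i5
    have k6 : Integrable (fun ω => (z i ω) ^ 2 * (z j ω) ^ 2
        - 2 * (a j ω * ((z i ω) ^ 2 * z j ω))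
        - (d j / c) * (z i ω) ^ 2
        - 2 * (a i ω * (z i ω * (z j ω) ^ 2))
        + 4 * ((a i ω * a j ω) * (z i ω * z j ω))
        + 2 * (d j / c) * (a i ω * z i ω)) P := k5.add i6
    have k7 : Integrable (fun ω => (z i ω) ^ 2 * (z j ω) ^ 2
        - 2 * (a j ω * ((z i ω) ^ 2 * z j ω))
        - (d j / c) * (z i ω) ^ 2
        - 2 * (a i ω * (z i ω * (z j ω) ^ 2))
        + 4 * ((a i ω * a j ω) * (z i ω * z j ω))
        + 2 * (d j / c) * (a i ω * z i ω)
        - (d i / c) * (z j ω) ^ 2) P := k6.sub i7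
    have k8 : Integrable (fun ω => (z i ω) ^ 2 * (z j ω) ^ 2
        - 2 * (a j ω * ((z i ω) ^ 2 * z j ω))
        - (d j / c) * (z i ω) ^ 2
        - 2 * (a i ω * (z i ω * (z j ω) ^ 2))
        + 4 * ((a i ω * a j ω) * (z i ω * z j ω))
        + 2 * (d j / c) * (a i ω * z i ω)
        - (d i / c) * (z j ω) ^ 2
        + 2 * (d i / c) * (a j ω * z j ω)) P := k7.add i8
    rw [e, integral_add k8 i9, integral_add k7 i8, integral_sub k6 i7,
      integral_add k5 i6, integral_add k4 i5, integral_sub k3 i4,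
      integral_sub k2 i3, integral_sub i1 i2,
      integral_const_mul, integral_const_mul, integral_const_mul, integral_const_mul,
      integral_const_mul, integral_const_mul, integral_const_mul,
      hz2z2 i j hij, haz2z i j hij, hz2 i, hazz2 i j hij, haazz i j hij,
      haz i i, hz2 j, haz j j]
    simp only [integral_const, probReal_univ, ENNReal.toReal_one, smul_eq_mul, one_mul]
    ring
  have hRReq : ∀ i, ∫ ω, R i ω * R i ω ∂P
      = 2 * (d i / c) ^ 2 + 4 * (d i / c) * ∫ ω, Q i ω ∂P := by
    intro i
    have e : (fun ω => R i ω * R i ω)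
        = fun ω => (z i ω) ^ 4
            - 4 * (a i ω * (z i ω) ^ 3)
            - 2 * (d i / c) * (z i ω) ^ 2
            + 4 * ((a i ω) ^ 2 * (z i ω) ^ 2)
            + 4 * (d i / c) * (a i ω * z i ω)
            + (d i / c) * (d i / c) := by
      funext ω
      simp only [hRdef]
      ring
    have i1 := hIZ i 4
    have i2 := (hIaz3 i).const_mul 4
    have i3 := (hIZ i 2).const_mul (2 * (d i / c))
    have i4 := (hIa2z2 i i).const_mul 4
    have i5 := (hIaz i i).const_mul (4 * (d i / c))
    have i6 : Integrable (fun _ : Ω => (d i / c) * (d i / c)) P := integrable_const _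
    have k2 : Integrable (fun ω => (z i ω) ^ 4 - 4 * (a i ω * (z i ω) ^ 3)) P := i1.sub i2
    have k3 : Integrable (fun ω => (z i ω) ^ 4 - 4 * (a i ω * (z i ω) ^ 3)
        - 2 * (d i / c) * (z i ω) ^ 2) P := k2.sub i3
    have k4 : Integrable (fun ω => (z i ω) ^ 4 - 4 * (a i ω * (z i ω) ^ 3)
        - 2 * (d i / c) * (z i ω) ^ 2
        + 4 * ((a i ω) ^ 2 * (z i ω) ^ 2)) P := k3.add i4
    have k5 : Integrable (fun ω => (z i ω) ^ 4 - 4 * (a i ω * (z i ω) ^ 3)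
        - 2 * (d i / c) * (z i ω) ^ 2
        + 4 * ((a i ω) ^ 2 * (z i ω) ^ 2)
        + 4 * (d i / c) * (a i ω * z i ω)) P := k4.add i5
    rw [e, integral_add k5 i6, integral_add k4 i5, integral_add k3 i4,
      integral_sub k2 i3, integral_sub i1 i2,
      integral_const_mul, integral_const_mul, integral_const_mul, integral_const_mul,
      hz4 i, haz3 i, hz2 i, ha2z2 i i, haz i i]
    simp only [integral_const, probReal_univ, ENNReal.toReal_one, smul_eq_mul, one_mul]
    ring
  have hIWW : ∀ i j, Integrable (fun ω => W i ω * W j ω) P := fun i j =>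
    aux_L2_mul (hLW i) (hLW j)
  have hIQQ : ∀ i j, Integrable (fun ω => Q i ω * Q j ω) P := fun i j =>
    aux_L2_mul (hLQ i) (hLQ j)
  have hWW : ∀ i j, ∫ ω, W i ω * W j ω ∂P
      = ∫ ω, Q i ω * Q j ω ∂P
        + (if i = j then 2 * (d i / c) ^ 2 + 4 * (d i / c) * ∫ ω, Q i ω ∂P else 0) := by
    intro i j
    have e : (fun ω => W i ω * W j ω)
        = fun ω => Q i ω * Q j ω + (Q i ω * R j ω + (Q j ω * R i ω + R i ω * R j ω)) := by
      funext ω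
      simp only [hWdef, hQdef, hRdef]
      ring
    have kk : Integrable (fun ω => Q j ω * R i ω + R i ω * R j ω) P :=
      (hIQR j i).add (aux_L2_mul (hLR i) (hLR j))
    have kkk : Integrable (fun ω => Q i ω * R j ω + (Q j ω * R i ω + R i ω * R j ω)) P :=
      (hIQR i j).add kk
    rw [e, integral_add (hIQQ i j) kkk, integral_add (hIQR i j) kk,
      integral_add (hIQR j i) (aux_L2_mul (hLR i) (hLR j)),
      hQR i j, hQR j i]
    by_cases hij : i = j
    · subst hij
      rw [if_pos rfl, hRReq i]
      ring
    · rw [if_neg hij, hRRne i j hij]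
      ring
  -- expectations of W and R
  have hER : ∀ i, ∫ ω, R i ω ∂P = 0 := by
    intro i
    have k : Integrable (fun ω => (z i ω) ^ 2 - 2 * (a i ω * z i ω)) P :=
      (hIZ i 2).sub ((hIaz i i).const_mul 2)
    have e : R i = fun ω => (z i ω) ^ 2 - 2 * (a i ω * z i ω) - d i / c := by
      funext ω
      simp only [hRdef]
    rw [e, integral_sub k (integrable_const _),
      integral_sub (hIZ i 2) ((hIaz i i).const_mul 2),
      integral_const_mul, hz2 i, haz i i]
    simp only [integral_const, probReal_univ, ENNReal.toReal_one, smul_eq_mul, one_mul]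
    ring
  have hIR : ∀ i, Integrable (R i) P := fun i => (hLR i).integrable one_le_two
  have hEW : ∀ i, ∫ ω, W i ω ∂P = ∫ ω, Q i ω ∂P := by
    intro i
    have e : W i = fun ω => Q i ω + R i ω := by
      funext ω
      simp only [hWdef, hQdef, hRdef]
      ring
    rw [e, integral_add (hIQ i) (hIR i), hER i, add_zero]
  -- variance computation
  have hMf : MemLp (fun ω => (1 / (m : ℝ)) * ∑ i, W i ω) 2 P :=
    (memLp_finset_sum Finset.univ (fun i _ => hLW i)).const_mul _
  have hSf : MemLp (fun ω => (1 / (m : ℝ)) * ∑ i, Q i ω) 2 P :=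
    (memLp_finset_sum Finset.univ (fun i _ => hLQ i)).const_mul _
  have hvarW : variance (fun ω => (1 / (m : ℝ)) * ∑ i, W i ω) P
      = (∫ ω, ((1 / (m : ℝ)) * ∑ i, W i ω) ^ 2 ∂P)
        - (∫ ω, (1 / (m : ℝ)) * ∑ i, W i ω ∂P) ^ 2 := variance_eq_sub hMf
  have hvarQ : variance (fun ω => (1 / (m : ℝ)) * ∑ i, Q i ω) P
      = (∫ ω, ((1 / (m : ℝ)) * ∑ i, Q i ω) ^ 2 ∂P)
        - (∫ ω, (1 / (m : ℝ)) * ∑ i, Q i ω ∂P) ^ 2 := variance_eq_sub hSf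
  have hEsumW : ∫ ω, (1 / (m : ℝ)) * ∑ i, W i ω ∂P
      = (1 / (m : ℝ)) * ∑ i, ∫ ω, Q i ω ∂P := by
    rw [integral_const_mul, integral_finset_sum Finset.univ (fun i _ => hIW i)]
    congr 1
    exact Finset.sum_congr rfl fun i _ => hEW i
  have hEsumQ : ∫ ω, (1 / (m : ℝ)) * ∑ i, Q i ω ∂P
      = (1 / (m : ℝ)) * ∑ i, ∫ ω, Q i ω ∂P := by
    rw [integral_const_mul, integral_finset_sum Finset.univ (fun i _ => hIQ i)]
  have hsqW : ∫ ω, ((1 / (m : ℝ)) * ∑ i, W i ω) ^ 2 ∂P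
      = (1 / (m : ℝ)) ^ 2 * ∑ i, ∑ j, ∫ ω, W i ω * W j ω ∂P := by
    have e : (fun ω => ((1 / (m : ℝ)) * ∑ i, W i ω) ^ 2)
        = fun ω => (1 / (m : ℝ)) ^ 2 * ∑ i, ∑ j, W i ω * W j ω := by
      funext ω
      rw [mul_pow, pow_two (∑ i, W i ω), Finset.sum_mul_sum]
    rw [e, integral_const_mul, integral_finset_sum Finset.univ
      (fun i _ => integrable_finset_sum Finset.univ (fun j _ => hIWW i j))]
    congr 1
    exact Finset.sum_congr rfl fun i _ =>
      integral_finset_sum Finset.univ fun j _ => hIWW i j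
  have hsqQ : ∫ ω, ((1 / (m : ℝ)) * ∑ i, Q i ω) ^ 2 ∂P
      = (1 / (m : ℝ)) ^ 2 * ∑ i, ∑ j, ∫ ω, Q i ω * Q j ω ∂P := by
    have e : (fun ω => ((1 / (m : ℝ)) * ∑ i, Q i ω) ^ 2)
        = fun ω => (1 / (m : ℝ)) ^ 2 * ∑ i, ∑ j, Q i ω * Q j ω := by
      funext ω
      rw [mul_pow, pow_two (∑ i, Q i ω), Finset.sum_mul_sum]
    rw [e, integral_const_mul, integral_finset_sum Finset.univ
      (fun i _ => integrable_finset_sum Finset.univ (fun j _ => hIQQ i j))]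
    congr 1
    exact Finset.sum_congr rfl fun i _ =>
      integral_finset_sum Finset.univ fun j _ => hIQQ i j
  -- put everything together
  have hsumWW : ∑ i, ∑ j, ∫ ω, W i ω * W j ω ∂P
      = (∑ i, ∑ j, ∫ ω, Q i ω * Q j ω ∂P)
        + ∑ i, (2 * (d i / c) ^ 2 + 4 * (d i / c) * ∫ ω, Q i ω ∂P) := by
    calc ∑ i, ∑ j, ∫ ω, W i ω * W j ω ∂P
        = ∑ i, ∑ j, (∫ ω, Q i ω * Q j ω ∂P
            + if i = j then 2 * (d i / c) ^ 2 + 4 * (d i / c) * ∫ ω, Q i ω ∂P else 0) :=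
          Finset.sum_congr rfl fun i _ => Finset.sum_congr rfl fun j _ => hWW i j
      _ = ∑ i, ((∑ j, ∫ ω, Q i ω * Q j ω ∂P)
            + ∑ j, if i = j then 2 * (d i / c) ^ 2 + 4 * (d i / c) * ∫ ω, Q i ω ∂P else 0) :=
          Finset.sum_congr rfl fun i _ => Finset.sum_add_distrib
      _ = (∑ i, ∑ j, ∫ ω, Q i ω * Q j ω ∂P)
            + ∑ i, ∑ j, (if i = j then 2 * (d i / c) ^ 2 + 4 * (d i / c) * ∫ ω, Q i ω ∂P else 0) :=
          Finset.sum_add_distrib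
      _ = (∑ i, ∑ j, ∫ ω, Q i ω * Q j ω ∂P)
            + ∑ i, (2 * (d i / c) ^ 2 + 4 * (d i / c) * ∫ ω, Q i ω ∂P) := by
          congr 1
          refine Finset.sum_congr rfl fun i _ => ?_
          rw [Finset.sum_ite_eq Finset.univ i
            (fun _ => 2 * (d i / c) ^ 2 + 4 * (d i / c) * ∫ ω, Q i ω ∂P)]
          exact if_pos (Finset.mem_univ i)
  rw [hvarW, hvarQ, hEsumW, hEsumQ, hsqW, hsqQ, hsumWW]
  have hfinal : ∑ i, (2 * (d i / c) ^ 2 + 4 * (d i / c) * ∫ ω, Q i ω ∂P)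
      = 2 * ∑ i, ((d i / c) ^ 2 + 2 * (d i / c) * ∫ ω, Q i ω ∂P) := by
    rw [Finset.mul_sum]
    exact Finset.sum_congr rfl fun i _ => by ring
  rw [hfinal]
  ring
end
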